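/- Let $X$ be a quandle (a rack with $x \triangleleft x = x$ for all $x$) and $B$ its dg bialgebra with the Koszul-signed comultiplication $\widetilde\Delta$. Then $\widetilde\Delta(e_x^2) = e_x^2 \otimes x^2 + 1 \otimes e_x^2$; in particular the two-sided ideal $\langle e_x^2 : x \in X\rangle$ is a coideal and is stable under $d$, so $B^Q := B/\langle e_x^2 \rangle$ inherits a differential graded bialgebra structure. -/

import Mathlib

open scoped TensorProduct

/-- A rack: a set with a binary operation `act x y = x ◁ y` such that right
translations are bijective and right self-distributivity holds. -/
structure RackS (X : Type*) where
  act : X → X → X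
  bij : ∀ y : X, Function.Bijective fun x => act x y
  distrib : ∀ x y z : X, act (act x y) z = act (act x z) (act y z)

/-- The relations `y * x^y = x * y` and `y * e_{x^y} = e_x * y` defining the
dg bialgebra `B(X)`; the left copy of `X` (via `Sum.inl`) gives the degree-zero
generators `x`, the right copy (via `Sum.inr`) the degree-one generators `e_x`. -/
inductive Brel (k : Type*) [CommRing k] {X : Type*} (R : RackS X) :
    FreeAlgebra k (X ⊕ X) → FreeAlgebra k (X ⊕ X) → Prop
  | comm (x y : X) : Brel k R
      (FreeAlgebra.ι k (Sum.inl y) * FreeAlgebra.ι k (Sum.inl (R.act x y)))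
      (FreeAlgebra.ι k (Sum.inl x) * FreeAlgebra.ι k (Sum.inl y))
  | eact (x y : X) : Brel k R
      (FreeAlgebra.ι k (Sum.inl y) * FreeAlgebra.ι k (Sum.inr (R.act x y)))
      (FreeAlgebra.ι k (Sum.inr x) * FreeAlgebra.ι k (Sum.inl y))

/-- The algebra `B = k⟨x, e_y : x,y ∈ X⟩ / ⟨y x^y - x y, y e_{x^y} - e_x y⟩`. -/
abbrev BAlg (k : Type*) [CommRing k] {X : Type*} (R : RackS X) := RingQuot (Brel k R)

variable (k : Type*) [CommRing k] {X : Type*} (R : RackS X)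

/-- The degree-zero generator `x` of `B`. -/
noncomputable def gg (x : X) : BAlg k R :=
  RingQuot.mkAlgHom k (Brel k R) (FreeAlgebra.ι k (Sum.inl x))

/-- The degree-one generator `e_x` of `B`. -/
noncomputable def ee (x : X) : BAlg k R :=
  RingQuot.mkAlgHom k (Brel k R) (FreeAlgebra.ι k (Sum.inr x))

/-- The degree-`n` homogeneous component of `B`: the span of images of monomials in the
generators containing exactly `n` of the degree-one generators `e_x`. -/
def Bdeg (n : ℕ) : Submodule k (BAlg k R) :=
  Submodule.span k {z | ∃ l : List (X ⊕ X), l.countP (fun s => s.isRight) = n ∧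
    z = (l.map (Sum.elim (gg k R) (ee k R))).prod}

/-- `d` is the superderivation of degree `-1` of `B` with `d(x) = 0`, `d(e_x) = 1 - x`:
it satisfies the graded Leibniz rule `d(ab) = d(a)b + (-1)^{|a|} a d(b)` for `a`
homogeneous of degree `m`. -/
def IsBDeriv (d : BAlg k R →ₗ[k] BAlg k R) : Prop :=
  (∀ (m : ℕ) (a b : BAlg k R), a ∈ Bdeg k R m →
      d (a * b) = d a * b + ((-1 : k) ^ m) • (a * d b)) ∧
  (∀ x : X, d (gg k R x) = 0) ∧
  (∀ x : X, d (ee k R x) = 1 - gg k R x)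

/-- `μ` is the Koszul-signed multiplication on `B ⊗ B`:
`(a ⊗ b)(a' ⊗ b') = (-1)^{|b||a'|} (a a') ⊗ (b b')` for `b, a'` homogeneous. -/
def IsKoszulMul
    (μ : BAlg k R ⊗[k] BAlg k R →ₗ[k] BAlg k R ⊗[k] BAlg k R →ₗ[k] BAlg k R ⊗[k] BAlg k R) :
    Prop :=
  ∀ (m n : ℕ) (a b a' b' : BAlg k R), b ∈ Bdeg k R m → a' ∈ Bdeg k R n →
    μ (a ⊗ₜ b) (a' ⊗ₜ b') = ((-1 : k) ^ (m * n)) • ((a * a') ⊗ₜ[k] (b * b'))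

/-- `Δ : B → B ⊗ B` is the comultiplication: a unital multiplicative map (for the
Koszul-signed multiplication `μ` on `B ⊗ B`) with `Δ(x) = x ⊗ x` and
`Δ(e_x) = e_x ⊗ x + 1 ⊗ e_x`. -/
def IsBCoprod
    (μ : BAlg k R ⊗[k] BAlg k R →ₗ[k] BAlg k R ⊗[k] BAlg k R →ₗ[k] BAlg k R ⊗[k] BAlg k R)
    (Δ : BAlg k R →ₗ[k] BAlg k R ⊗[k] BAlg k R) : Prop :=
  Δ 1 = 1 ⊗ₜ 1 ∧
  (∀ a b : BAlg k R, Δ (a * b) = μ (Δ a) (Δ b)) ∧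
  (∀ x : X, Δ (gg k R x) = gg k R x ⊗ₜ gg k R x) ∧
  (∀ x : X, Δ (ee k R x) = ee k R x ⊗ₜ gg k R x + 1 ⊗ₜ ee k R x)

/-- The monomial `e_{x_1} ⋯ e_{x_n}` of `B` associated to a list of rack elements. -/
noncomputable def Emon (k : Type*) [CommRing k] {X : Type*} (R : RackS X) (l : List X) :
    BAlg k R :=
  (l.map (ee k R)).prod

/-- `τ` is the signed flip of `B ⊗ B`: `τ(a ⊗ b) = (-1)^{|a||b|} b ⊗ a` on homogeneous
elements. -/
def IsTauFlip (τ : BAlg k R ⊗[k] BAlg k R →ₗ[k] BAlg k R ⊗[k] BAlg k R) : Prop :=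
  ∀ (m n : ℕ) (a b : BAlg k R), a ∈ Bdeg k R m → b ∈ Bdeg k R n →
    τ (a ⊗ₜ b) = ((-1 : k) ^ (m * n)) • (b ⊗ₜ[k] a)

/-- The product of a list of elements of `B ⊗ B` with respect to the multiplication `μ`
(applied from the left, with empty product `1 ⊗ 1`). -/
noncomputable def muProd (k : Type*) [CommRing k] {X : Type*} (R : RackS X)
    (μ : BAlg k R ⊗[k] BAlg k R →ₗ[k] BAlg k R ⊗[k] BAlg k R →ₗ[k] BAlg k R ⊗[k] BAlg k R) :
    List (BAlg k R ⊗[k] BAlg k R) → BAlg k R ⊗[k] BAlg k R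
  | [] => 1 ⊗ₜ 1
  | t :: ts => μ t (muProd k R μ ts)

/-- `h : B → B ⊗ᴰ B` is the degree-one `A`-module map with `h(1) = 0`,
`h(e_x) = e_x ⊗ e_x` (`A`-linearity for the diagonal action on `B ⊗ B`), given on
monomials by
`h(e_{x_1}⋯e_{x_n}) = Σᵢ (-1)^{i-1} (τΔ)(e_{x_1})⋯(τΔ)(e_{x_{i-1}}) h(e_{x_i}) Δ(e_{x_{i+1}})⋯Δ(e_{x_n})`. -/
def IsHMap (μ : BAlg k R ⊗[k] BAlg k R →ₗ[k] BAlg k R ⊗[k] BAlg k R →ₗ[k] BAlg k R ⊗[k] BAlg k R)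
    (τ : BAlg k R ⊗[k] BAlg k R →ₗ[k] BAlg k R ⊗[k] BAlg k R)
    (Δ : BAlg k R →ₗ[k] BAlg k R ⊗[k] BAlg k R)
    (h : BAlg k R →ₗ[k] BAlg k R ⊗[k] BAlg k R) : Prop :=
  h 1 = 0 ∧
  (∀ x : X, h (ee k R x) = ee k R x ⊗ₜ ee k R x) ∧
  (∀ (x : X) (b : BAlg k R), h (gg k R x * b) = μ (gg k R x ⊗ₜ gg k R x) (h b)) ∧
  (∀ l : List X, h (Emon k R l) = ∑ i : Fin l.length, ((-1 : k) ^ (i : ℕ)) •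
    muProd k R μ
      (((l.take (i : ℕ)).map fun z => τ (Δ (ee k R z)))
        ++ [h (ee k R (l.get i))]
        ++ ((l.drop ((i : ℕ) + 1)).map fun z => Δ (ee k R z))))

/-- The two-sided ideal `⟨e_x² : x ∈ X⟩` of `B` (as the `k`-span of the elements
`a e_y² b`). -/
def QIdeal : Submodule k (BAlg k R) :=
  Submodule.span k {z | ∃ (y : X) (a b : BAlg k R), z = a * (ee k R y * ee k R y) * b}

/-- The subspace `I ⊗ B + B ⊗ I` of `B ⊗ B`, where `I = ⟨e_x²⟩`. -/
def QIdealT : Submodule k (BAlg k R ⊗[k] BAlg k R) :=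
  Submodule.span k {t | (∃ u w : BAlg k R, u ∈ QIdeal k R ∧ t = u ⊗ₜ w) ∨
    (∃ u w : BAlg k R, u ∈ QIdeal k R ∧ t = w ⊗ₜ u)}

namespace QCAux

open Submodule TensorProduct

variable {k : Type*} [CommRing k] {X : Type*} {R : RackS X}

/-- The set of monomials in the generators. -/
def Mon (k : Type*) [CommRing k] {X : Type*} (R : RackS X) : Set (BAlg k R) :=
  {z | ∃ l : List (X ⊕ X), z = (l.map (Sum.elim (gg k R) (ee k R))).prod}

lemma bsmul_one (z : BAlg k R) : (1 : k) • z = z := one_smul k z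

lemma bsmul_neg_one (z : BAlg k R) : (-1 : k) • z = -z := neg_one_smul k z

lemma mem_Bdeg_of_list (l : List (X ⊕ X)) :
    (l.map (Sum.elim (gg k R) (ee k R))).prod ∈ Bdeg k R (l.countP fun s => s.isRight) :=
  Submodule.subset_span ⟨l, rfl, rfl⟩

lemma one_mem_Bdeg0 : (1 : BAlg k R) ∈ Bdeg k R 0 := by
  simpa using mem_Bdeg_of_list (k := k) (R := R) []

lemma gg_mem (x : X) : gg k R x ∈ Bdeg k R 0 := by
  simpa using mem_Bdeg_of_list (k := k) (R := R) [Sum.inl x]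

lemma ee_mem (x : X) : ee k R x ∈ Bdeg k R 1 := by
  simpa using mem_Bdeg_of_list (k := k) (R := R) [Sum.inr x]

lemma Bdeg_mul {m n : ℕ} {a b : BAlg k R} (ha : a ∈ Bdeg k R m) (hb : b ∈ Bdeg k R n) :
    a * b ∈ Bdeg k R (m + n) := by
  have h := Submodule.mul_mem_mul ha hb
  rw [Bdeg, Bdeg, Submodule.span_mul_span] at h
  refine Submodule.span_le.mpr ?_ h
  rintro z ⟨s, ⟨l1, hc1, rfl⟩, t, ⟨l2, hc2, rfl⟩, rfl⟩
  exact Submodule.subset_span ⟨l1 ++ l2, by simp [List.countP_append, hc1, hc2], by simp⟩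

lemma esq_mem_Bdeg2 (y : X) : ee k R y * ee k R y ∈ Bdeg k R 2 := by
  have h := Bdeg_mul (ee_mem (k := k) (R := R) y) (ee_mem y)
  norm_num at h
  exact h

lemma gsq_mem_Bdeg0 (y : X) : gg k R y * gg k R y ∈ Bdeg k R 0 := by
  have h := Bdeg_mul (gg_mem (k := k) (R := R) y) (gg_mem y)
  norm_num at h
  exact h

lemma span_Mon_mul {a b : BAlg k R} (ha : a ∈ span k (Mon k R)) (hb : b ∈ span k (Mon k R)) :
    a * b ∈ span k (Mon k R) := by
  have h := Submodule.mul_mem_mul ha hb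
  rw [Submodule.span_mul_span] at h
  refine Submodule.span_le.mpr ?_ h
  rintro z ⟨s, ⟨l1, rfl⟩, t, ⟨l2, rfl⟩, rfl⟩
  exact Submodule.subset_span ⟨l1 ++ l2, by simp⟩

lemma span_Mon_top : span k (Mon k R) = (⊤ : Submodule k (BAlg k R)) := by
  rw [eq_top_iff]
  rintro z -
  obtain ⟨w, rfl⟩ := RingQuot.mkAlgHom_surjective k (Brel k R) z
  induction w using FreeAlgebra.induction with
  | grade0 r =>
      rw [AlgHom.commutes, Algebra.algebraMap_eq_smul_one]
      exact Submodule.smul_mem _ _ (Submodule.subset_span ⟨[], by simp⟩)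
  | grade1 s =>
      rcases s with x | x
      · exact Submodule.subset_span ⟨[Sum.inl x], by simp [gg]⟩
      · exact Submodule.subset_span ⟨[Sum.inr x], by simp [ee]⟩
  | mul a b ha hb => rw [map_mul]; exact span_Mon_mul ha hb
  | add a b ha hb => rw [map_add]; exact Submodule.add_mem _ ha hb

lemma mem_span_Mon (z : BAlg k R) : z ∈ span k (Mon k R) := by
  rw [span_Mon_top]; trivial

lemma gcomm (hq : ∀ x : X, R.act x x = x) (x : X) :
    gg k R x * ee k R x = ee k R x * gg k R x := by
  have h := RingQuot.mkAlgHom_rel k (Brel.eact (k := k) (R := R) x x)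
  rw [hq x] at h
  simpa [gg, ee, map_mul] using h

lemma mem_QIdeal_gen (y : X) (a b : BAlg k R) :
    a * (ee k R y * ee k R y) * b ∈ QIdeal k R :=
  Submodule.subset_span ⟨y, a, b, rfl⟩

lemma esq_mem_QIdeal (y : X) : ee k R y * ee k R y ∈ QIdeal k R := by
  simpa using mem_QIdeal_gen y (1 : BAlg k R) 1

lemma QIdeal_mul_left (c : BAlg k R) {z : BAlg k R} (hz : z ∈ QIdeal k R) :
    c * z ∈ QIdeal k R := by
  have h : QIdeal k R ≤ (QIdeal k R).comap (LinearMap.mulLeft k c) := by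
    rw [QIdeal, Submodule.span_le]
    rintro w ⟨y, a, b, rfl⟩
    simp only [SetLike.mem_coe, Submodule.mem_comap, LinearMap.mulLeft_apply]
    exact Submodule.subset_span ⟨y, c * a, b, by simp [mul_assoc]⟩
  exact h hz

lemma QIdeal_mul_right (c : BAlg k R) {z : BAlg k R} (hz : z ∈ QIdeal k R) :
    z * c ∈ QIdeal k R := by
  have h : QIdeal k R ≤ (QIdeal k R).comap (LinearMap.mulRight k c) := by
    rw [QIdeal, Submodule.span_le]
    rintro w ⟨y, a, b, rfl⟩
    simp only [SetLike.mem_coe, Submodule.mem_comap, LinearMap.mulRight_apply]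
    exact Submodule.subset_span ⟨y, a, b * c, by simp [mul_assoc]⟩
  exact h hz

/-- Homogeneous generators of the ideal. -/
def SGen (k : Type*) [CommRing k] {X : Type*} (R : RackS X) : Set (BAlg k R) :=
  {z | ∃ (y : X) (l1 l2 : List (X ⊕ X)),
    z = (l1.map (Sum.elim (gg k R) (ee k R))).prod * (ee k R y * ee k R y) *
      (l2.map (Sum.elim (gg k R) (ee k R))).prod}

lemma QIdeal_le_span_SGen : QIdeal k R ≤ span k (SGen k R) := by
  rw [QIdeal, Submodule.span_le]
  rintro w ⟨y, a, b, rfl⟩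
  have inner : ∀ l1 : List (X ⊕ X), ∀ b' : BAlg k R,
      (l1.map (Sum.elim (gg k R) (ee k R))).prod * (ee k R y * ee k R y) * b'
        ∈ span k (SGen k R) := by
    intro l1 b'
    have h : span k (Mon k R) ≤ (span k (SGen k R)).comap
        (LinearMap.mulLeft k
          ((l1.map (Sum.elim (gg k R) (ee k R))).prod * (ee k R y * ee k R y))) := by
      rw [Submodule.span_le]
      rintro m ⟨l2, rfl⟩
      exact Submodule.subset_span ⟨y, l1, l2, rfl⟩
    exact h (mem_span_Mon b')
  have h : span k (Mon k R) ≤ (span k (SGen k R)).comap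
      ((LinearMap.mulRight k b).comp (LinearMap.mulRight k (ee k R y * ee k R y))) := by
    rw [Submodule.span_le]
    rintro m ⟨l1, rfl⟩
    exact inner l1 b
  exact h (mem_span_Mon a)

lemma mem_QIdealT_left {u : BAlg k R} (w : BAlg k R) (hu : u ∈ QIdeal k R) :
    u ⊗ₜ[k] w ∈ QIdealT k R :=
  Submodule.subset_span (Or.inl ⟨u, w, hu, rfl⟩)

lemma mem_QIdealT_right {u : BAlg k R} (w : BAlg k R) (hu : u ∈ QIdeal k R) :
    w ⊗ₜ[k] u ∈ QIdealT k R :=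
  Submodule.subset_span (Or.inr ⟨u, w, hu, rfl⟩)

lemma tensor_ind_right (P : Submodule k (BAlg k R ⊗[k] BAlg k R))
    (h : ∀ (a b : BAlg k R) (n : ℕ), b ∈ Bdeg k R n → a ⊗ₜ[k] b ∈ P)
    (t : BAlg k R ⊗[k] BAlg k R) : t ∈ P := by
  have key : ∀ a b : BAlg k R, a ⊗ₜ[k] b ∈ P := by
    intro a b
    have hle : span k (Mon k R) ≤ P.comap (TensorProduct.mk k (BAlg k R) (BAlg k R) a) := by
      rw [Submodule.span_le]
      rintro m ⟨l, rfl⟩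
      exact h a _ _ (mem_Bdeg_of_list l)
    exact hle (mem_span_Mon b)
  have htop : (⊤ : Submodule k (BAlg k R ⊗[k] BAlg k R)) ≤ P := by
    rw [← TensorProduct.span_tmul_eq_top k]
    refine Submodule.span_le.mpr ?_
    rintro t ⟨a, b, rfl⟩
    exact key a b
  exact htop trivial

lemma tensor_ind_left (P : Submodule k (BAlg k R ⊗[k] BAlg k R))
    (h : ∀ (a b : BAlg k R) (n : ℕ), a ∈ Bdeg k R n → a ⊗ₜ[k] b ∈ P)
    (t : BAlg k R ⊗[k] BAlg k R) : t ∈ P := by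
  have key : ∀ a b : BAlg k R, a ⊗ₜ[k] b ∈ P := by
    intro a b
    have hle : span k (Mon k R) ≤
        P.comap ((TensorProduct.mk k (BAlg k R) (BAlg k R)).flip b) := by
      rw [Submodule.span_le]
      rintro m ⟨l, rfl⟩
      exact h _ b _ (mem_Bdeg_of_list l)
    exact hle (mem_span_Mon a)
  have htop : (⊤ : Submodule k (BAlg k R ⊗[k] BAlg k R)) ≤ P := by
    rw [← TensorProduct.span_tmul_eq_top k]
    refine Submodule.span_le.mpr ?_
    rintro t ⟨a, b, rfl⟩
    exact key a b
  exact htop trivial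

lemma tensor_ind_left_app (P : Submodule k (BAlg k R ⊗[k] BAlg k R))
    (f : BAlg k R ⊗[k] BAlg k R →ₗ[k] BAlg k R ⊗[k] BAlg k R)
    (h : ∀ (a b : BAlg k R) (n : ℕ), a ∈ Bdeg k R n → f (a ⊗ₜ[k] b) ∈ P)
    (t : BAlg k R ⊗[k] BAlg k R) : f t ∈ P :=
  tensor_ind_left (P.comap f) h t

lemma tensor_ind_right_app (P : Submodule k (BAlg k R ⊗[k] BAlg k R))
    (f : BAlg k R ⊗[k] BAlg k R →ₗ[k] BAlg k R ⊗[k] BAlg k R)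
    (h : ∀ (a b : BAlg k R) (n : ℕ), b ∈ Bdeg k R n → f (a ⊗ₜ[k] b) ∈ P)
    (t : BAlg k R ⊗[k] BAlg k R) : f t ∈ P :=
  tensor_ind_right (P.comap f) h t

end QCAux

namespace QCAux

open Submodule TensorProduct

variable {k : Type*} [CommRing k] {X : Type*} {R : RackS X}

lemma SGen_mem_QIdeal {z : BAlg k R} (hz : z ∈ SGen k R) : z ∈ QIdeal k R := by
  obtain ⟨y, l1, l2, rfl⟩ := hz
  exact mem_QIdeal_gen y _ _

lemma SGen_homog {z : BAlg k R} (hz : z ∈ SGen k R) : ∃ n, z ∈ Bdeg k R n := by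
  obtain ⟨y, l1, l2, rfl⟩ := hz
  exact ⟨_, Bdeg_mul (Bdeg_mul (mem_Bdeg_of_list l1) (Bdeg_mul (ee_mem y) (ee_mem y)))
    (mem_Bdeg_of_list l2)⟩

lemma mu_absorb
    {μ : BAlg k R ⊗[k] BAlg k R →ₗ[k] BAlg k R ⊗[k] BAlg k R →ₗ[k] BAlg k R ⊗[k] BAlg k R}
    (hμ : IsKoszulMul k R μ) (s q : BAlg k R ⊗[k] BAlg k R) (hq : q ∈ QIdealT k R) :
    μ s q ∈ QIdealT k R := by
  have hle : QIdealT k R ≤ (QIdealT k R).comap (μ s) := by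
    rw [QIdealT, Submodule.span_le]
    rintro t (⟨u, w, hu, rfl⟩ | ⟨u, w, hu, rfl⟩)
    · -- μ s (u ⊗ w) ∈ J
      simp only [SetLike.mem_coe, Submodule.mem_comap]
      have hu' := QIdeal_le_span_SGen hu
      have hle2 : span k (SGen k R) ≤ (QIdealT k R).comap
          ((μ s).comp ((TensorProduct.mk k (BAlg k R) (BAlg k R)).flip w)) := by
        rw [Submodule.span_le]
        intro u' hu'mem
        obtain ⟨n, hn⟩ := SGen_homog hu'mem
        have huI := SGen_mem_QIdeal hu'mem
        simp only [SetLike.mem_coe, Submodule.mem_comap, LinearMap.comp_apply,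
          LinearMap.flip_apply, TensorProduct.mk_apply]
        refine tensor_ind_right ((QIdealT k R).comap (μ.flip (u' ⊗ₜ[k] w))) ?_ s
        intro a b m hb
        simp only [Submodule.mem_comap, LinearMap.flip_apply]
        rw [hμ m n a b u' w hb hn]
        exact Submodule.smul_mem _ _ (mem_QIdealT_left _ (QIdeal_mul_left a huI))
      exact hle2 hu'
    · -- μ s (w ⊗ u) ∈ J
      simp only [SetLike.mem_coe, Submodule.mem_comap]
      have hu' := QIdeal_le_span_SGen hu
      have hle2 : span k (SGen k R) ≤ (QIdealT k R).comap
          ((μ s).comp (TensorProduct.mk k (BAlg k R) (BAlg k R) w)) := by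
        rw [Submodule.span_le]
        intro u' hu'mem
        obtain ⟨n, hn⟩ := SGen_homog hu'mem
        have huI := SGen_mem_QIdeal hu'mem
        simp only [SetLike.mem_coe, Submodule.mem_comap, LinearMap.comp_apply,
          TensorProduct.mk_apply]
        have hlew : span k (Mon k R) ≤ (QIdealT k R).comap
            ((μ s).comp ((TensorProduct.mk k (BAlg k R) (BAlg k R)).flip u')) := by
          rw [Submodule.span_le]
          rintro w' ⟨l, rfl⟩
          simp only [SetLike.mem_coe, Submodule.mem_comap, LinearMap.comp_apply,
            LinearMap.flip_apply, TensorProduct.mk_apply]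
          refine tensor_ind_right ((QIdealT k R).comap
            (μ.flip ((l.map (Sum.elim (gg k R) (ee k R))).prod ⊗ₜ[k] u'))) ?_ s
          intro a b m hb
          simp only [Submodule.mem_comap, LinearMap.flip_apply]
          rw [hμ m _ a b _ u' hb (mem_Bdeg_of_list l)]
          exact Submodule.smul_mem _ _ (mem_QIdealT_right _ (QIdeal_mul_left b huI))
        exact hlew (mem_span_Mon w)
      exact hle2 hu'
  exact hle hq

lemma delta_esq (hq : ∀ x : X, R.act x x = x)
    {μ : BAlg k R ⊗[k] BAlg k R →ₗ[k] BAlg k R ⊗[k] BAlg k R →ₗ[k] BAlg k R ⊗[k] BAlg k R}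
    (hμ : IsKoszulMul k R μ)
    {Δ : BAlg k R →ₗ[k] BAlg k R ⊗[k] BAlg k R} (hΔ : IsBCoprod k R μ Δ) (x : X) :
    Δ (ee k R x * ee k R x) =
      (ee k R x * ee k R x) ⊗ₜ[k] (gg k R x * gg k R x) + 1 ⊗ₜ[k] (ee k R x * ee k R x) := by
  have h1 := hΔ.2.1 (ee k R x) (ee k R x)
  rw [hΔ.2.2.2 x] at h1
  rw [map_add μ, LinearMap.add_apply, map_add, map_add] at h1
  rw [hμ 0 1 _ _ _ _ (gg_mem x) (ee_mem x), hμ 0 0 _ _ _ _ (gg_mem x) one_mem_Bdeg0,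
    hμ 1 1 _ _ _ _ (ee_mem x) (ee_mem x), hμ 1 0 _ _ _ _ (ee_mem x) one_mem_Bdeg0] at h1
  rw [h1, gcomm hq x]
  norm_num [one_smul, neg_one_smul, mul_one, one_mul]
  module

lemma mu_delta_esq (hq : ∀ x : X, R.act x x = x)
    {μ : BAlg k R ⊗[k] BAlg k R →ₗ[k] BAlg k R ⊗[k] BAlg k R →ₗ[k] BAlg k R ⊗[k] BAlg k R}
    (hμ : IsKoszulMul k R μ)
    {Δ : BAlg k R →ₗ[k] BAlg k R ⊗[k] BAlg k R} (hΔ : IsBCoprod k R μ Δ) (y : X)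
    (t : BAlg k R ⊗[k] BAlg k R) :
    μ (Δ (ee k R y * ee k R y)) t ∈ QIdealT k R := by
  rw [delta_esq hq hμ hΔ y, map_add μ, LinearMap.add_apply]
  have hE : ee k R y * ee k R y ∈ QIdeal k R := esq_mem_QIdeal y
  have hG : gg k R y * gg k R y ∈ Bdeg k R 0 := gsq_mem_Bdeg0 y
  have hE2 : ee k R y * ee k R y ∈ Bdeg k R 2 := esq_mem_Bdeg2 y
  refine Submodule.add_mem _ ?_ ?_
  · refine tensor_ind_left_app (QIdealT k R)
      (μ ((ee k R y * ee k R y) ⊗ₜ[k] (gg k R y * gg k R y))) ?_ t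
    intro c d p hc
    rw [hμ 0 p _ _ c d hG hc]
    exact Submodule.smul_mem _ _ (mem_QIdealT_left _ (QIdeal_mul_right c hE))
  · refine tensor_ind_left_app (QIdealT k R)
      (μ ((1 : BAlg k R) ⊗ₜ[k] (ee k R y * ee k R y))) ?_ t
    intro c d p hc
    rw [hμ 2 p _ _ c d hE2 hc]
    exact Submodule.smul_mem _ _ (mem_QIdealT_right _ (QIdeal_mul_right d hE))

lemma d_esq (hq : ∀ x : X, R.act x x = x)
    {d : BAlg k R →ₗ[k] BAlg k R} (hd : IsBDeriv k R d) (x : X) :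
    d (ee k R x * ee k R x) = 0 := by
  have h := hd.1 1 (ee k R x) (ee k R x) (ee_mem x)
  rw [hd.2.2 x] at h
  have h2 : ((-1 : k) ^ 1) = -1 := by norm_num
  rw [h, h2, bsmul_neg_one, sub_mul, mul_sub, one_mul, mul_one, gcomm hq x]
  abel

end QCAux


/-- For a quandle, `Δ̃(e_x²) = e_x² ⊗ x² + 1 ⊗ e_x²`; in particular the two-sided ideal
`⟨e_x² : x ∈ X⟩` is a coideal (`Δ` maps it into `I ⊗ B + B ⊗ I`) and is stable under
`d`, so `B^Q = B/⟨e_x²⟩` inherits a differential graded bialgebra structure. -/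
theorem quandle_coideal (k : Type*) [CommRing k] {X : Type*} (R : RackS X)
    (hq : ∀ x : X, R.act x x = x)
    (μ : BAlg k R ⊗[k] BAlg k R →ₗ[k] BAlg k R ⊗[k] BAlg k R →ₗ[k] BAlg k R ⊗[k] BAlg k R)
    (hμ : IsKoszulMul k R μ)
    (Δ : BAlg k R →ₗ[k] BAlg k R ⊗[k] BAlg k R) (hΔ : IsBCoprod k R μ Δ)
    (d : BAlg k R →ₗ[k] BAlg k R) (hd : IsBDeriv k R d) :
    (∀ x : X, Δ (ee k R x * ee k R x) =
      (ee k R x * ee k R x) ⊗ₜ (gg k R x * gg k R x) + 1 ⊗ₜ (ee k R x * ee k R x)) ∧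
    (∀ z ∈ QIdeal k R, Δ z ∈ QIdealT k R) ∧
    (∀ z ∈ QIdeal k R, d z ∈ QIdeal k R) := by

  refine ⟨fun x => QCAux.delta_esq hq hμ hΔ x, ?_, ?_⟩
  · intro z hz
    have hle : QIdeal k R ≤ (QIdealT k R).comap Δ := by
      rw [QIdeal, Submodule.span_le]
      rintro w ⟨y, a, b, rfl⟩
      simp only [SetLike.mem_coe, Submodule.mem_comap]
      rw [mul_assoc, hΔ.2.1, hΔ.2.1]
      exact QCAux.mu_absorb hμ _ _ (QCAux.mu_delta_esq hq hμ hΔ y _)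
    exact hle hz
  · intro z hz
    have key : ∀ (y : X) (b : BAlg k R), ∀ a ∈ Submodule.span k (QCAux.Mon k R),
        d (a * ((ee k R y * ee k R y) * b)) ∈ QIdeal k R := by
      intro y b
      have hEb : ∀ c : BAlg k R, d ((ee k R y * ee k R y) * c)
          = (ee k R y * ee k R y) * d c := by
        intro c
        rw [hd.1 2 _ c (QCAux.esq_mem_Bdeg2 y), QCAux.d_esq hq hd y, zero_mul, zero_add]
        have h2 : ((-1 : k) ^ 2) = 1 := by norm_num
        rw [h2, QCAux.bsmul_one]
      intro a ha
      have hle : Submodule.span k (QCAux.Mon k R) ≤ (QIdeal k R).comap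
          (d ∘ₗ LinearMap.mulRight k ((ee k R y * ee k R y) * b)) := by
        rw [Submodule.span_le]
        rintro m ⟨l, rfl⟩
        simp only [SetLike.mem_coe, Submodule.mem_comap, LinearMap.comp_apply,
          LinearMap.mulRight_apply]
        rw [hd.1 _ _ _ (QCAux.mem_Bdeg_of_list l), hEb b]
        refine Submodule.add_mem _ ?_ (Submodule.smul_mem _ _ ?_)
        · rw [← mul_assoc]
          exact QCAux.mem_QIdeal_gen y _ b
        · rw [← mul_assoc]
          exact QCAux.mem_QIdeal_gen y _ (d b)
      exact hle ha
    have hle : QIdeal k R ≤ (QIdeal k R).comap d := by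
      rw [QIdeal, Submodule.span_le]
      rintro w ⟨y, a, b, rfl⟩
      simp only [SetLike.mem_coe, Submodule.mem_comap]
      rw [mul_assoc]
      exact key y b a (QCAux.mem_span_Mon a)
    exact hle hz
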